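/- For every m ≥ 1 and every 0 ≤ k ≤ m, the k-th entry of the h-vector of the independence complex of G_m equals the Delannoy number d(m, k); that is, the coefficient of t^{m−k} in the polynomial Σ_{i=0}^{m} f_{i−1}(m)·(t−1)^{m−i} equals d(m, k). -/

import Mathlib

/-- The vertex set of the graph `Gₘ`: `Sum.inl i` is the vertex `a_{i+1}` (for `0 ≤ i < m`),
`Sum.inr (Sum.inl i)` is `b_{i+1}`, and `Sum.inr (Sum.inr j)` is `c_{j+2}`. -/
abbrev GV (m : ℕ) := Fin m ⊕ Fin m ⊕ Fin (m - 1)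

/-- The vertex `a_{i+1}` of `Gₘ`. -/
def aV {m : ℕ} (i : Fin m) : GV m := Sum.inl i
/-- The vertex `b_{i+1}` of `Gₘ`. -/
def bV {m : ℕ} (i : Fin m) : GV m := Sum.inr (Sum.inl i)
/-- The vertex `c_{j+2}` of `Gₘ`. -/
def cV {m : ℕ} (j : Fin (m - 1)) : GV m := Sum.inr (Sum.inr j)

/-- Half of the adjacency relation of `Gₘ` (the full relation is its symmetrization):
the edges `a_i a_{i+1}`, `a_i b_i`, `b_i c_{i+1}`, `b_i c_i`, `c_i a_{i+1}` (1-based indices). -/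
def adjHalf (m : ℕ) : GV m → GV m → Bool
  | Sum.inl i, Sum.inl j => decide (i.val + 1 = j.val)
  | Sum.inl i, Sum.inr (Sum.inl j) => decide (i = j)
  | Sum.inl _, Sum.inr (Sum.inr _) => false
  | Sum.inr (Sum.inl _), Sum.inl _ => false
  | Sum.inr (Sum.inl _), Sum.inr (Sum.inl _) => false
  | Sum.inr (Sum.inl i), Sum.inr (Sum.inr j) => decide (i.val = j.val ∨ i.val = j.val + 1)
  | Sum.inr (Sum.inr j), Sum.inl i => decide (i.val = j.val + 2)
  | Sum.inr (Sum.inr _), Sum.inr (Sum.inl _) => false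
  | Sum.inr (Sum.inr _), Sum.inr (Sum.inr _) => false

/-- The graph `Gₘ` from the paper (with `3m - 1` vertices). -/
def Gm (m : ℕ) : SimpleGraph (GV m) where
  Adj u v := adjHalf m u v = true ∨ adjHalf m v u = true
  symm := ⟨fun _ _ h => h.symm⟩
  loopless := ⟨by
    rintro (i | i | j) h <;> simp [adjHalf] at h⟩

instance (m : ℕ) : DecidableRel (Gm m).Adj := fun u v =>
  inferInstanceAs (Decidable (adjHalf m u v = true ∨ adjHalf m v u = true))

/-- The number of independent sets of cardinality `k` of a graph `G`;
`nIndep G (i + 1)` is the face number `fᵢ` of the independence complex of `G`. -/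
noncomputable def nIndep {V : Type*} (G : SimpleGraph V) (k : ℕ) : ℕ :=
  Nat.card {A : Finset V // A.card = k ∧ ∀ u ∈ A, ∀ v ∈ A, ¬ G.Adj u v}

/-- The polynomial `h(m, t) = ∑_{i=0}^{m} f_{i−1}(m) (t − 1)^{m−i}` attached to the
independence complex of `Gₘ` (here `f_{i−1}(m) = nIndep (Gm m) i`, and `f_{−1}(m) = 1`).
Its coefficient of `t^{m-k}` is the `h`-vector entry `h_k(m)`. -/
noncomputable def hNumPoly (m : ℕ) : Polynomial ℤ :=
  ∑ i ∈ Finset.range (m + 1),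
    Polynomial.C (nIndep (Gm m) i : ℤ) * (Polynomial.X - 1) ^ (m - i)

/-- The Delannoy number `Del a b`, the number of lattice paths from `(0,0)` to `(a,b)`
using steps `(1,0)`, `(0,1)` and `(1,1)`; defined by the standard recursion. -/
def Del : ℕ → ℕ → ℕ
  | 0, _ => 1
  | _ + 1, 0 => 1
  | a + 1, b + 1 => Del a (b + 1) + Del (a + 1) b + Del a b
open Finset Polynomial

section generic
variable {V : Type*} [Fintype V] [DecidableEq V]

/-- number of independent sets of size `s` avoiding `X`. -/
def cnt (G : SimpleGraph V) [DecidableRel G.Adj] (s : ℕ) (X : Finset V) : ℕ :=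
  (Finset.univ.filter (fun A : Finset V =>
    A.card = s ∧ (∀ x ∈ A, x ∉ X) ∧ ∀ u ∈ A, ∀ v ∈ A, ¬ G.Adj u v)).card

lemma nIndep_eq_cnt (G : SimpleGraph V) [DecidableRel G.Adj] (k : ℕ) :
    nIndep G k = cnt G k ∅ := by
  rw [nIndep, Nat.card_eq_fintype_card, Fintype.card_subtype, cnt]
  congr 1
  apply Finset.filter_congr
  intro A _
  simp

lemma cnt_zero (G : SimpleGraph V) [DecidableRel G.Adj] (X : Finset V) :
    cnt G 0 X = 1 := by
  rw [cnt]
  rw [show (Finset.univ.filter (fun A : Finset V =>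
    A.card = 0 ∧ (∀ x ∈ A, x ∉ X) ∧ ∀ u ∈ A, ∀ v ∈ A, ¬ G.Adj u v)) = {∅} from ?_]
  · simp
  · ext A
    simp only [Finset.mem_filter, Finset.mem_univ, true_and, Finset.mem_singleton,
      Finset.card_eq_zero]
    constructor
    · rintro ⟨h, -⟩; exact h
    · rintro rfl; simp

lemma cnt_of_card_lt (G : SimpleGraph V) [DecidableRel G.Adj] (s : ℕ) (X : Finset V)
    (h : Fintype.card V < s) : cnt G s X = 0 := by
  rw [cnt, Finset.card_eq_zero]
  ext A
  simp only [Finset.mem_filter, Finset.mem_univ, true_and, Finset.notMem_empty, iff_false]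
  rintro ⟨rfl, -⟩
  exact absurd (Finset.card_le_univ A) (by simpa using Nat.not_le.2 h)

lemma cnt_split (G : SimpleGraph V) [DecidableRel G.Adj] (s : ℕ) (X : Finset V) (v : V)
    (hv : v ∉ X) (N : Finset V) (hN : ∀ u, u ∈ N ↔ u = v ∨ u ∈ X ∨ G.Adj v u) :
    cnt G (s+1) X = cnt G (s+1) (insert v X) + cnt G s N := by
  classical
  rw [cnt, cnt, cnt]
  rw [← Finset.card_filter_add_card_filter_not (p := fun A : Finset V => v ∈ A)]
  rw [add_comm]
  congr 1
  · -- v ∉ A piece equals the (insert v X) count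
    rw [Finset.filter_filter]
    congr 1
    apply Finset.filter_congr
    intro A _
    constructor
    · rintro ⟨⟨hc, hX, hI⟩, hvA⟩
      refine ⟨hc, fun x hx hmem => ?_, hI⟩
      rcases Finset.mem_insert.1 hmem with rfl | hxX
      · exact hvA hx
      · exact hX x hx hxX
    · rintro ⟨hc, hX, hI⟩
      exact ⟨⟨hc, fun x hx hxX => hX x hx (Finset.mem_insert.2 (Or.inr hxX)), hI⟩,
        fun hvA => hX v hvA (Finset.mem_insert_self v X)⟩
  · -- v ∈ A piece bijects with cnt G s N via erase/insert
    rw [Finset.filter_filter]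
    apply Finset.card_nbij' (fun A => A.erase v) (fun B => insert v B)
    · intro A hA
      simp only [Finset.mem_coe, Finset.mem_filter, Finset.mem_univ, true_and] at hA ⊢
      obtain ⟨⟨hc, hX, hI⟩, hvA⟩ := hA
      refine ⟨by rw [Finset.card_erase_of_mem hvA, hc]; rfl, ?_, ?_⟩
      · intro x hx hxN
        obtain ⟨hxv, hxA⟩ := Finset.mem_erase.1 hx
        rcases (hN x).1 hxN with rfl | hxX | hadj
        · exact hxv rfl
        · exact hX x hxA hxX
        · exact hI v hvA x hxA hadj
      · intro u hu w hw
        exact hI u (Finset.mem_of_mem_erase hu) w (Finset.mem_of_mem_erase hw)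
    · intro B hB
      simp only [Finset.mem_coe, Finset.mem_filter, Finset.mem_univ, true_and] at hB ⊢
      obtain ⟨hc, hXN, hI⟩ := hB
      have hvB : v ∉ B := fun h => hXN v h ((hN v).2 (Or.inl rfl))
      refine ⟨⟨?_, ?_, ?_⟩, Finset.mem_insert_self v B⟩
      · rw [Finset.card_insert_of_notMem hvB, hc]
      · intro x hx hxX
        rcases Finset.mem_insert.1 hx with rfl | hxB
        · exact hv hxX
        · exact hXN x hxB ((hN x).2 (Or.inr (Or.inl hxX)))
      · intro u hu w hw hadj
        rcases Finset.mem_insert.1 hu with rfl | huB <;> rcases Finset.mem_insert.1 hw with rfl | hwB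
        · exact G.loopless.irrefl _ hadj
        · exact hXN w hwB ((hN w).2 (Or.inr (Or.inr hadj)))
        · exact hXN u huB ((hN u).2 (Or.inr (Or.inr (hadj.symm))))
        · exact hI u huB w hwB hadj
    · intro A hA
      simp only [Finset.mem_coe, Finset.mem_filter, Finset.mem_univ, true_and] at hA
      exact Finset.insert_erase hA.2
    · intro B hB
      simp only [Finset.mem_coe, Finset.mem_filter, Finset.mem_univ, true_and] at hB
      have hvB : v ∉ B := fun h => hB.2.1 v h ((hN v).2 (Or.inl rfl))
      exact Finset.erase_insert hvB

end generic

/-! ### Graph-specific embeddings -/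

def eGV (k : ℕ) : GV (k+1) → GV (k+2)
  | Sum.inl i => Sum.inl i.castSucc
  | Sum.inr (Sum.inl i) => Sum.inr (Sum.inl i.castSucc)
  | Sum.inr (Sum.inr j) => Sum.inr (Sum.inr j.castSucc)

lemma eGV_inj (k : ℕ) : Function.Injective (eGV k) := by
  rintro (i|i|i) (j|j|j) h <;> simp [eGV] at h ⊢ <;> exact h

/-- `eGV` as a `Finset.map` embedding. -/
def eEmb (k : ℕ) : GV (k+1) ↪ GV (k+2) := ⟨eGV k, eGV_inj k⟩

lemma Gm_adj {m : ℕ} (u v : GV m) :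
    (Gm m).Adj u v ↔ (adjHalf m u v = true ∨ adjHalf m v u = true) := Iff.rfl

lemma adj_eGV (k : ℕ) (u v : GV (k+1)) :
    (Gm (k+2)).Adj (eGV k u) (eGV k v) ↔ (Gm (k+1)).Adj u v := by
  rcases u with i|i|i <;> rcases v with j|j|j <;>
    simp [Gm_adj, adjHalf, eGV, Fin.ext_iff]

lemma eGV_ne_a (k : ℕ) (y : GV (k+1)) : eGV k y ≠ aV (Fin.last (k+1)) := by
  rcases y with i|i|i <;> simp [eGV, aV, Fin.ext_iff] <;> omega

lemma eGV_ne_b (k : ℕ) (y : GV (k+1)) : eGV k y ≠ bV (Fin.last (k+1)) := by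
  rcases y with i|i|i <;> simp [eGV, bV, Fin.ext_iff] <;> omega

lemma eGV_ne_c (k : ℕ) (y : GV (k+1)) : eGV k y ≠ cV (Fin.last k) := by
  rcases y with i|i|i <;> simp [eGV, cV, Fin.ext_iff] <;> omega

lemma eGV_surj (k : ℕ) (x : GV (k+2)) (h1 : x ≠ aV (Fin.last (k+1)))
    (h2 : x ≠ bV (Fin.last (k+1))) (h3 : x ≠ cV (Fin.last k)) : ∃ y, eGV k y = x := by
  rcases x with i|i|i
  · obtain ⟨j, rfl⟩ := Fin.exists_castSucc_eq.2
      (fun he : i = Fin.last (k+1) => h1 (by simp [aV, he]))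
    exact ⟨Sum.inl j, rfl⟩
  · obtain ⟨j, rfl⟩ := Fin.exists_castSucc_eq.2
      (fun he : i = Fin.last (k+1) => h2 (by simp [bV, he]))
    exact ⟨Sum.inr (Sum.inl j), rfl⟩
  · obtain ⟨j, rfl⟩ := Fin.exists_castSucc_eq.2
      (fun he : i = Fin.last k => h3 (by simp [cV, he]))
    exact ⟨Sum.inr (Sum.inr j), rfl⟩

/-- Shifting a count on `G (k+2)` where the whole last column is forbidden down to `G (k+1)`. -/
lemma cnt_shift (k s : ℕ) (X : Finset (GV (k+1))) :
    cnt (Gm (k+2)) s (insert (aV (Fin.last (k+1))) (insert (bV (Fin.last (k+1)))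
      (insert (cV (Fin.last k)) (X.map (eEmb k))))) = cnt (Gm (k+1)) s X := by
  classical
  rw [cnt, cnt]
  apply Finset.card_nbij' (fun A => A.preimage (eGV k) (eGV_inj k).injOn)
    (fun B => B.map (eEmb k))
  · intro A hA
    simp only [Finset.mem_coe, Finset.mem_filter, Finset.mem_univ, true_and] at hA ⊢
    obtain ⟨hc, hX, hI⟩ := hA
    have hrange : ∀ x ∈ A, ∃ y, eGV k y = x := by
      intro x hx
      refine eGV_surj k x ?_ ?_ ?_ <;> intro he <;> subst he <;>
        exact hX _ hx (by simp [Finset.mem_insert])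
    have hmap : (A.preimage (eGV k) (eGV_inj k).injOn).map (eEmb k) = A := by
      ext z
      simp only [Finset.mem_map, Finset.mem_preimage, eEmb, Function.Embedding.coeFn_mk]
      constructor
      · rintro ⟨y, hy, rfl⟩; exact hy
      · intro hz; obtain ⟨y, rfl⟩ := hrange z hz; exact ⟨y, hz, rfl⟩
    refine ⟨?_, ?_, ?_⟩
    · rw [← hc, ← Finset.card_map (eEmb k), hmap]
    · intro y hy hyX
      rw [Finset.mem_preimage] at hy
      exact hX _ hy (by
        simp only [Finset.mem_insert]
        exact Or.inr (Or.inr (Or.inr (Finset.mem_map_of_mem _ hyX))))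
    · intro u hu w hw hadj
      rw [Finset.mem_preimage] at hu hw
      exact hI _ hu _ hw ((adj_eGV k u w).2 hadj)
  · intro B hB
    simp only [Finset.mem_coe, Finset.mem_filter, Finset.mem_univ, true_and] at hB ⊢
    obtain ⟨hc, hX, hI⟩ := hB
    refine ⟨by rw [Finset.card_map, hc], ?_, ?_⟩
    · intro x hx hmem
      obtain ⟨y, hyB, rfl⟩ := Finset.mem_map.1 hx
      rcases Finset.mem_insert.1 hmem with he | hmem
      · exact eGV_ne_a k y he
      rcases Finset.mem_insert.1 hmem with he | hmem
      · exact eGV_ne_b k y he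
      rcases Finset.mem_insert.1 hmem with he | hmem
      · exact eGV_ne_c k y he
      obtain ⟨y', hy', he⟩ := Finset.mem_map.1 hmem
      exact hX y hyB (by rwa [← eGV_inj k he])
    · intro u hu w hw hadj
      obtain ⟨y, hyB, rfl⟩ := Finset.mem_map.1 hu
      obtain ⟨z, hzB, rfl⟩ := Finset.mem_map.1 hw
      exact hI y hyB z hzB ((adj_eGV k y z).1 hadj)
  · intro A hA
    simp only [Finset.mem_coe, Finset.mem_filter, Finset.mem_univ, true_and] at hA
    obtain ⟨hc, hX, hI⟩ := hA
    have hrange : ∀ x ∈ A, ∃ y, eGV k y = x := by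
      intro x hx
      refine eGV_surj k x ?_ ?_ ?_ <;> intro he <;> subst he <;>
        exact hX _ hx (by simp [Finset.mem_insert])
    ext z
    simp only [Finset.mem_map, Finset.mem_preimage, eEmb, Function.Embedding.coeFn_mk]
    constructor
    · rintro ⟨y, hy, rfl⟩; exact hy
    · intro hz; obtain ⟨y, rfl⟩ := hrange z hz; exact ⟨y, hz, rfl⟩
  · intro B hB
    ext y
    simp only [Finset.mem_preimage, Finset.mem_map, eEmb, Function.Embedding.coeFn_mk]
    constructor
    · rintro ⟨y', hy', he⟩; rwa [← eGV_inj k he]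
    · intro h; exact ⟨y, h, rfl⟩

lemma adj_A2 (w : ℕ) (u : GV (w+3)) :
    (Gm (w+3)).Adj (aV (Fin.last (w+2))) u ↔
      u = bV (Fin.last (w+2)) ∨ u = eGV (w+1) (aV (Fin.last (w+1))) ∨
        u = eGV (w+1) (cV (Fin.last w)) := by
  rcases u with i|i|i <;>
    simp [Gm_adj, adjHalf, eGV, aV, bV, cV, Fin.ext_iff, Fin.val_last] <;> omega

lemma adj_B2 (k : ℕ) (u : GV (k+2)) :
    (Gm (k+2)).Adj (bV (Fin.last (k+1))) u ↔
      u = aV (Fin.last (k+1)) ∨ u = cV (Fin.last k) := by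
  rcases u with i|i|i <;>
    simp [Gm_adj, adjHalf, eGV, aV, bV, cV, Fin.ext_iff, Fin.val_last] <;> omega

lemma adj_C2 (k : ℕ) (u : GV (k+2)) :
    (Gm (k+2)).Adj (cV (Fin.last k)) u ↔
      u = bV (Fin.last (k+1)) ∨ u = eGV k (bV (Fin.last k)) := by
  rcases u with i|i|i <;>
    simp [Gm_adj, adjHalf, eGV, aV, bV, cV, Fin.ext_iff, Fin.val_last] <;> omega

abbrev vA2 (k : ℕ) : GV (k+2) := aV (Fin.last (k+1))
abbrev vB2 (k : ℕ) : GV (k+2) := bV (Fin.last (k+1))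
abbrev vC2 (k : ℕ) : GV (k+2) := cV (Fin.last k)

lemma step1 (w s : ℕ) : cnt (Gm (w+3)) (s+1) ∅ = cnt (Gm (w+3)) (s+1) (insert (vA2 (w+1)) ∅)
      + cnt (Gm (w+3)) s
        {vA2 (w+1), vB2 (w+1), eGV (w+1) (vA2 w), eGV (w+1) (vC2 w)} := by
  refine cnt_split _ s ∅ _ (by simp) _ ?_
  intro u
  simp only [adj_A2 w u, Finset.mem_insert, Finset.mem_singleton, Finset.notMem_empty]
  tauto

lemma step2 (w s : ℕ) : cnt (Gm (w+3)) (s+1) (insert (vA2 (w+1)) ∅)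
      = cnt (Gm (w+3)) (s+1) (insert (vB2 (w+1)) (insert (vA2 (w+1)) ∅))
      + cnt (Gm (w+3)) s {vB2 (w+1), vA2 (w+1), vC2 (w+1)} := by
  refine cnt_split _ s _ _ (by simp [aV, bV]) _ ?_
  intro u
  simp only [adj_B2 (w+1) u, Finset.mem_insert, Finset.mem_singleton, Finset.notMem_empty]
  tauto

lemma step3 (w s : ℕ) : cnt (Gm (w+3)) s {vB2 (w+1), vA2 (w+1), vC2 (w+1)}
      = cnt (Gm (w+2)) s ∅ := by
  rw [show ({vB2 (w+1), vA2 (w+1), vC2 (w+1)} : Finset (GV (w+3)))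
      = insert (aV (Fin.last (w+2))) (insert (bV (Fin.last (w+2)))
        (insert (cV (Fin.last (w+1))) ((∅ : Finset (GV (w+2))).map (eEmb (w+1))))) from by
    ext x; simp [aV, bV, cV]; tauto]
  exact cnt_shift (w+1) s ∅

lemma step4 (w s : ℕ) : cnt (Gm (w+3)) (s+1) (insert (vB2 (w+1)) (insert (vA2 (w+1)) ∅))
      = cnt (Gm (w+3)) (s+1) (insert (vC2 (w+1)) (insert (vB2 (w+1)) (insert (vA2 (w+1)) ∅)))
      + cnt (Gm (w+3)) s {vC2 (w+1), vB2 (w+1), vA2 (w+1), eGV (w+1) (vB2 w)} := by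
  refine cnt_split _ s _ _ (by simp [aV, bV, cV]) _ ?_
  intro u
  simp only [adj_C2 (w+1) u, Finset.mem_insert, Finset.mem_singleton, Finset.notMem_empty]
  tauto

lemma step5 (w s : ℕ) : cnt (Gm (w+3)) s
      (insert (vC2 (w+1)) (insert (vB2 (w+1)) (insert (vA2 (w+1)) ∅)))
      = cnt (Gm (w+2)) s ∅ := by
  rw [show (insert (vC2 (w+1)) (insert (vB2 (w+1)) (insert (vA2 (w+1)) ∅)) : Finset (GV (w+3)))
      = insert (aV (Fin.last (w+2))) (insert (bV (Fin.last (w+2)))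
        (insert (cV (Fin.last (w+1))) ((∅ : Finset (GV (w+2))).map (eEmb (w+1))))) from by
    ext x; simp [aV, bV, cV]; tauto]
  exact cnt_shift (w+1) s ∅

lemma step6 (w s : ℕ) : cnt (Gm (w+3)) s {vC2 (w+1), vB2 (w+1), vA2 (w+1), eGV (w+1) (vB2 w)}
      = cnt (Gm (w+2)) s (insert (vB2 w) ∅) := by
  rw [show ({vC2 (w+1), vB2 (w+1), vA2 (w+1), eGV (w+1) (vB2 w)} : Finset (GV (w+3)))
      = insert (aV (Fin.last (w+2))) (insert (bV (Fin.last (w+2)))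
        (insert (cV (Fin.last (w+1)))
          ((insert (vB2 w) ∅ : Finset (GV (w+2))).map (eEmb (w+1))))) from by
    ext x; simp [aV, bV, cV, eEmb]; tauto]
  exact cnt_shift (w+1) s _

lemma step7 (w s : ℕ) : cnt (Gm (w+3)) (s+1)
      {vA2 (w+1), vB2 (w+1), eGV (w+1) (vA2 w), eGV (w+1) (vC2 w)}
      = cnt (Gm (w+3)) (s+1) (insert (vC2 (w+1))
          {vA2 (w+1), vB2 (w+1), eGV (w+1) (vA2 w), eGV (w+1) (vC2 w)})
      + cnt (Gm (w+3)) s {vC2 (w+1), vA2 (w+1), vB2 (w+1), eGV (w+1) (vA2 w),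
          eGV (w+1) (vC2 w), eGV (w+1) (vB2 w)} := by
  refine cnt_split _ s _ _ ?_ _ ?_
  · simp [aV, bV, cV, eGV, Fin.ext_iff]
  · intro u
    simp only [adj_C2 (w+1) u, Finset.mem_insert, Finset.mem_singleton, Finset.notMem_empty]
    tauto

lemma step8 (w s : ℕ) : cnt (Gm (w+3)) s (insert (vC2 (w+1))
      {vA2 (w+1), vB2 (w+1), eGV (w+1) (vA2 w), eGV (w+1) (vC2 w)})
      = cnt (Gm (w+2)) s {vA2 w, vC2 w} := by
  rw [show (insert (vC2 (w+1))
        {vA2 (w+1), vB2 (w+1), eGV (w+1) (vA2 w), eGV (w+1) (vC2 w)} : Finset (GV (w+3)))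
      = insert (aV (Fin.last (w+2))) (insert (bV (Fin.last (w+2)))
        (insert (cV (Fin.last (w+1)))
          (({vA2 w, vC2 w} : Finset (GV (w+2))).map (eEmb (w+1))))) from by
    ext x; simp [aV, bV, cV, eEmb]; tauto]
  exact cnt_shift (w+1) s _

lemma step9 (w s : ℕ) : cnt (Gm (w+3)) s {vC2 (w+1), vA2 (w+1), vB2 (w+1), eGV (w+1) (vA2 w),
      eGV (w+1) (vC2 w), eGV (w+1) (vB2 w)}
      = cnt (Gm (w+2)) s {vA2 w, vB2 w, vC2 w} := by
  rw [show ({vC2 (w+1), vA2 (w+1), vB2 (w+1), eGV (w+1) (vA2 w),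
        eGV (w+1) (vC2 w), eGV (w+1) (vB2 w)} : Finset (GV (w+3)))
      = insert (aV (Fin.last (w+2))) (insert (bV (Fin.last (w+2)))
        (insert (cV (Fin.last (w+1)))
          (({vA2 w, vB2 w, vC2 w} : Finset (GV (w+2))).map (eEmb (w+1))))) from by
    ext x; simp [aV, bV, cV, eEmb]; tauto]
  exact cnt_shift (w+1) s _

lemma step10 (w s : ℕ) : cnt (Gm (w+2)) (s+1) ∅ = cnt (Gm (w+2)) (s+1) (insert (vB2 w) ∅)
      + cnt (Gm (w+2)) s {vA2 w, vB2 w, vC2 w} := by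
  refine cnt_split _ s ∅ _ (by simp) _ ?_
  intro u
  simp only [adj_B2 w u, Finset.mem_insert, Finset.mem_singleton, Finset.notMem_empty]
  tauto

lemma step11 (w s : ℕ) : cnt (Gm (w+2)) (s+1) {vA2 w, vC2 w}
      = cnt (Gm (w+2)) (s+1) (insert (vB2 w) {vA2 w, vC2 w})
      + cnt (Gm (w+2)) s {vA2 w, vB2 w, vC2 w} := by
  refine cnt_split _ s _ _ (by simp [aV, bV, cV]) _ ?_
  intro u
  simp only [adj_B2 w u, Finset.mem_insert, Finset.mem_singleton, Finset.notMem_empty]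
  tauto

lemma step12 (w s : ℕ) : cnt (Gm (w+2)) s (insert (vB2 w) {vA2 w, vC2 w})
      = cnt (Gm (w+1)) s ∅ := by
  rw [show (insert (vB2 w) {vA2 w, vC2 w} : Finset (GV (w+2)))
      = insert (aV (Fin.last (w+1))) (insert (bV (Fin.last (w+1)))
        (insert (cV (Fin.last w)) ((∅ : Finset (GV (w+1))).map (eEmb w)))) from by
    ext x; simp [aV, bV, cV]; tauto]
  exact cnt_shift w s ∅

lemma step13 (w s : ℕ) : cnt (Gm (w+2)) s {vA2 w, vB2 w, vC2 w} = cnt (Gm (w+1)) s ∅ := by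
  rw [show ({vA2 w, vB2 w, vC2 w} : Finset (GV (w+2)))
      = insert (aV (Fin.last (w+1))) (insert (bV (Fin.last (w+1)))
        (insert (cV (Fin.last w)) ((∅ : Finset (GV (w+1))).map (eEmb w)))) from by
    ext x; simp [aV, bV, cV]]
  exact cnt_shift w s ∅

lemma key_rec (w r : ℕ) :
    nIndep (Gm (w+3)) (r+2) = nIndep (Gm (w+2)) (r+2) + 2 * nIndep (Gm (w+2)) (r+1)
      + nIndep (Gm (w+1)) (r+1) + nIndep (Gm (w+1)) r := by
  rw [nIndep_eq_cnt, nIndep_eq_cnt, nIndep_eq_cnt, nIndep_eq_cnt, nIndep_eq_cnt]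
  have h1 : cnt (Gm (w+3)) (r+2) ∅ = cnt (Gm (w+3)) (r+2) (insert (vA2 (w+1)) ∅)
      + cnt (Gm (w+3)) (r+1)
        {vA2 (w+1), vB2 (w+1), eGV (w+1) (vA2 w), eGV (w+1) (vC2 w)} := step1 w (r+1)
  have h2 : cnt (Gm (w+3)) (r+2) (insert (vA2 (w+1)) ∅)
      = cnt (Gm (w+3)) (r+2) (insert (vB2 (w+1)) (insert (vA2 (w+1)) ∅))
      + cnt (Gm (w+3)) (r+1) {vB2 (w+1), vA2 (w+1), vC2 (w+1)} := step2 w (r+1)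
  have h3 := step3 w (r+1)
  have h4 : cnt (Gm (w+3)) (r+2) (insert (vB2 (w+1)) (insert (vA2 (w+1)) ∅))
      = cnt (Gm (w+3)) (r+2) (insert (vC2 (w+1)) (insert (vB2 (w+1)) (insert (vA2 (w+1)) ∅)))
      + cnt (Gm (w+3)) (r+1) {vC2 (w+1), vB2 (w+1), vA2 (w+1), eGV (w+1) (vB2 w)} :=
    step4 w (r+1)
  have h5 := step5 w (r+2)
  have h6 := step6 w (r+1)
  have h7 : cnt (Gm (w+3)) (r+1)
      {vA2 (w+1), vB2 (w+1), eGV (w+1) (vA2 w), eGV (w+1) (vC2 w)}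
      = cnt (Gm (w+3)) (r+1) (insert (vC2 (w+1))
          {vA2 (w+1), vB2 (w+1), eGV (w+1) (vA2 w), eGV (w+1) (vC2 w)})
      + cnt (Gm (w+3)) r {vC2 (w+1), vA2 (w+1), vB2 (w+1), eGV (w+1) (vA2 w),
          eGV (w+1) (vC2 w), eGV (w+1) (vB2 w)} := step7 w r
  have h8 := step8 w (r+1)
  have h9 := step9 w r
  have h10 : cnt (Gm (w+2)) (r+1) ∅ = cnt (Gm (w+2)) (r+1) (insert (vB2 w) ∅)
      + cnt (Gm (w+2)) r {vA2 w, vB2 w, vC2 w} := step10 w r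
  have h11 : cnt (Gm (w+2)) (r+1) {vA2 w, vC2 w}
      = cnt (Gm (w+2)) (r+1) (insert (vB2 w) {vA2 w, vC2 w})
      + cnt (Gm (w+2)) r {vA2 w, vB2 w, vC2 w} := step11 w r
  have h12 := step12 w (r+1)
  have h13 := step13 w r
  omega

lemma key_one (w : ℕ) : nIndep (Gm (w+3)) 1 = nIndep (Gm (w+2)) 1 + 3 := by
  rw [nIndep_eq_cnt, nIndep_eq_cnt]
  have h1 : cnt (Gm (w+3)) 1 ∅ = cnt (Gm (w+3)) 1 (insert (vA2 (w+1)) ∅)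
      + cnt (Gm (w+3)) 0
        {vA2 (w+1), vB2 (w+1), eGV (w+1) (vA2 w), eGV (w+1) (vC2 w)} := step1 w 0
  have h2 : cnt (Gm (w+3)) 1 (insert (vA2 (w+1)) ∅)
      = cnt (Gm (w+3)) 1 (insert (vB2 (w+1)) (insert (vA2 (w+1)) ∅))
      + cnt (Gm (w+3)) 0 {vB2 (w+1), vA2 (w+1), vC2 (w+1)} := step2 w 0
  have h4 : cnt (Gm (w+3)) 1 (insert (vB2 (w+1)) (insert (vA2 (w+1)) ∅))
      = cnt (Gm (w+3)) 1 (insert (vC2 (w+1)) (insert (vB2 (w+1)) (insert (vA2 (w+1)) ∅)))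
      + cnt (Gm (w+3)) 0 {vC2 (w+1), vB2 (w+1), vA2 (w+1), eGV (w+1) (vB2 w)} := step4 w 0
  have h5 := step5 w 1
  have z1 := cnt_zero (Gm (w+3))
    ({vA2 (w+1), vB2 (w+1), eGV (w+1) (vA2 w), eGV (w+1) (vC2 w)} : Finset (GV (w+3)))
  have z2 := cnt_zero (Gm (w+3)) ({vB2 (w+1), vA2 (w+1), vC2 (w+1)} : Finset (GV (w+3)))
  have z3 := cnt_zero (Gm (w+3))
    ({vC2 (w+1), vB2 (w+1), vA2 (w+1), eGV (w+1) (vB2 w)} : Finset (GV (w+3)))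
  omega

lemma nIndep_zero (m : ℕ) : nIndep (Gm m) 0 = 1 := by
  rw [nIndep_eq_cnt]; exact cnt_zero _ _

lemma n1_1 : nIndep (Gm 1) 1 = 2 := by rw [nIndep_eq_cnt]; decide
lemma n1_2 : nIndep (Gm 1) 2 = 0 := by rw [nIndep_eq_cnt]; decide
lemma n2_1 : nIndep (Gm 2) 1 = 5 := by rw [nIndep_eq_cnt]; decide
lemma n2_2 : nIndep (Gm 2) 2 = 5 := by rw [nIndep_eq_cnt]; decide
lemma n2_3 : nIndep (Gm 2) 3 = 0 := by rw [nIndep_eq_cnt]; decide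

lemma card_GV (m : ℕ) : Fintype.card (GV m) = m + m + (m - 1) := by
  simp [GV]; omega

lemma nIndep_vanish : ∀ m s : ℕ, m < s → nIndep (Gm m) s = 0 := by
  intro m
  induction m using Nat.strong_induction_on with
  | _ m ih =>
    match m with
    | 0 => intro s hs; rw [nIndep_eq_cnt]; exact cnt_of_card_lt _ _ _ (by rw [card_GV]; omega)
    | 1 =>
      intro s hs
      match s, hs with
      | 2, _ => exact n1_2
      | (t+3), _ => rw [nIndep_eq_cnt]; exact cnt_of_card_lt _ _ _ (by rw [card_GV]; omega)
    | 2 =>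
      intro s hs
      match s, hs with
      | 3, _ => exact n2_3
      | 4, _ => rw [nIndep_eq_cnt]; decide
      | 5, _ => rw [nIndep_eq_cnt]; decide
      | (t+6), _ => rw [nIndep_eq_cnt]; exact cnt_of_card_lt _ _ _ (by rw [card_GV]; omega)
    | (w+3) =>
      intro s hs
      match s, hs with
      | (r+2), _ =>
        rw [key_rec w r, ih (w+2) (by omega) (r+2) (by omega), ih (w+2) (by omega) (r+1) (by omega),
          ih (w+1) (by omega) (r+1) (by omega), ih (w+1) (by omega) r (by omega)]

/-! ### Polynomial bookkeeping -/

noncomputable def Hs (m : ℕ) : Polynomial ℤ :=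
  ∑ i ∈ Finset.range (m + 1), Polynomial.C (nIndep (Gm m) (m - i) : ℤ) * Polynomial.X ^ i

lemma coeff_Hs (m j : ℕ) :
    (Hs m).coeff j = if j ≤ m then (nIndep (Gm m) (m - j) : ℤ) else 0 := by
  rw [Hs, Polynomial.finset_sum_coeff]
  simp only [Polynomial.coeff_C_mul, Polynomial.coeff_X_pow, mul_ite, mul_one, mul_zero]
  rw [Finset.sum_ite_eq (Finset.range (m+1)) j]
  simp [Nat.lt_succ_iff]

lemma hNumPoly_eq_comp (m : ℕ) : hNumPoly m = (Hs m).comp (Polynomial.X - 1) := by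
  rw [hNumPoly, Hs, Polynomial.comp, Polynomial.eval₂_finset_sum]
  conv_lhs => rw [← Finset.sum_range_reflect]
  apply Finset.sum_congr rfl
  intro j hj
  rw [Finset.mem_range, Nat.lt_succ_iff] at hj
  rw [show m + 1 - 1 - j = m - j from by omega, show m - (m - j) = j from by omega]
  simp [Polynomial.eval₂_mul, Polynomial.eval₂_C, Polynomial.eval₂_X_pow]

lemma Hs_rec (w : ℕ) :
    Hs (w+3) = (Polynomial.X + Polynomial.C 2) * Hs (w+2)
      + (Polynomial.X + Polynomial.C 1) * Hs (w+1) := by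
  ext j
  rw [Polynomial.coeff_add, add_mul, add_mul, Polynomial.coeff_add, Polynomial.coeff_add,
    Polynomial.coeff_C_mul, Polynomial.coeff_C_mul]
  match j with
  | 0 =>
    rw [Polynomial.mul_coeff_zero, Polynomial.mul_coeff_zero, Polynomial.coeff_X_zero,
      zero_mul, zero_mul]
    simp only [coeff_Hs, Nat.zero_le, if_true, Nat.sub_zero]
    have hk : nIndep (Gm (w+3)) (w+3) = nIndep (Gm (w+2)) (w+3)
        + 2 * nIndep (Gm (w+2)) (w+2) + nIndep (Gm (w+1)) (w+2)
        + nIndep (Gm (w+1)) (w+1) := key_rec w (w+1)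
    have v1 : nIndep (Gm (w+2)) (w+3) = 0 := nIndep_vanish (w+2) (w+3) (by omega)
    have v2 : nIndep (Gm (w+1)) (w+2) = 0 := nIndep_vanish (w+1) (w+2) (by omega)
    push_cast
    omega
  | t+1 =>
    rw [Polynomial.coeff_X_mul, Polynomial.coeff_X_mul]
    simp only [coeff_Hs]
    rcases Nat.lt_or_ge t (w+1) with ht | ht
    · -- t + 1 ≤ w + 1 : generic case
      obtain ⟨r, hr⟩ : ∃ r, w + 1 - (t+1) = r := ⟨_, rfl⟩
      rw [if_pos (by omega), if_pos (by omega), if_pos (by omega), if_pos (by omega),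
        if_pos (by omega)]
      rw [show w + 3 - (t+1) = r+2 from by omega, show w + 2 - t = r + 2 from by omega,
        show w + 2 - (t+1) = r+1 from by omega, show w + 1 - t = r + 1 from by omega,
        show w + 1 - (t+1) = r from by omega]
      have hk := key_rec w r
      push_cast
      omega
    · rcases Nat.lt_or_ge t (w+2) with ht2 | ht2
      · -- t = w + 1, i.e. j = w + 2
        have htt : t = w + 1 := by omega
        subst htt
        rw [if_pos (by omega), if_pos (by omega), if_pos (by omega), if_pos (by omega),
          if_neg (by omega)]
        rw [show w + 3 - (w+1+1) = 1 from by omega, show w + 2 - (w+1) = 1 from by omega,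
          show w + 2 - (w+1+1) = 0 from by omega, show w + 1 - (w+1) = 0 from by omega]
        have hk := key_one w
        have h0 : nIndep (Gm (w+2)) 0 = 1 := nIndep_zero _
        have h0' : nIndep (Gm (w+1)) 0 = 1 := nIndep_zero _
        push_cast
        omega
      · rcases Nat.lt_or_ge t (w+3) with ht3 | ht3
        · -- t = w + 2, i.e. j = w + 3
          have htt : t = w + 2 := by omega
          subst htt
          rw [if_pos (by omega), if_pos (by omega), if_neg (by omega), if_neg (by omega),
            if_neg (by omega)]
          rw [show w + 3 - (w+2+1) = 0 from by omega, show w + 2 - (w+2) = 0 from by omega]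
          have h0 : nIndep (Gm (w+3)) 0 = 1 := nIndep_zero _
          have h0' : nIndep (Gm (w+2)) 0 = 1 := nIndep_zero _
          push_cast
          omega
        · rw [if_neg (by omega), if_neg (by omega), if_neg (by omega), if_neg (by omega),
            if_neg (by omega)]
          ring

lemma h_rec (w : ℕ) :
    hNumPoly (w+3) = (Polynomial.X + 1) * hNumPoly (w+2) + Polynomial.X * hNumPoly (w+1) := by
  rw [hNumPoly_eq_comp, hNumPoly_eq_comp, hNumPoly_eq_comp, Hs_rec]
  simp only [Polynomial.add_comp, Polynomial.mul_comp, Polynomial.X_comp, Polynomial.C_comp,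
    map_one, map_ofNat, Polynomial.ofNat_comp, Polynomial.one_comp]
  ring

/-- The Delannoy polynomial `∑_k d(m,k) t^{m-k} = ∑_j D(j, m-j) t^j`. -/
noncomputable def DP (m : ℕ) : Polynomial ℤ :=
  ∑ j ∈ Finset.range (m + 1), Polynomial.C ((Del j (m - j) : ℤ)) * Polynomial.X ^ j

lemma coeff_DP (m j : ℕ) :
    (DP m).coeff j = if j ≤ m then (Del j (m - j) : ℤ) else 0 := by
  rw [DP, Polynomial.finset_sum_coeff]
  simp only [Polynomial.coeff_C_mul, Polynomial.coeff_X_pow, mul_ite, mul_one, mul_zero]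
  rw [Finset.sum_ite_eq (Finset.range (m+1)) j]
  simp [Nat.lt_succ_iff]

lemma Del_zero_right (a : ℕ) : Del a 0 = 1 := by cases a <;> simp [Del]

lemma DP_rec (w : ℕ) :
    DP (w+3) = (Polynomial.X + 1) * DP (w+2) + Polynomial.X * DP (w+1) := by
  ext j
  rw [Polynomial.coeff_add, add_mul, one_mul, Polynomial.coeff_add]
  match j with
  | 0 =>
    rw [Polynomial.mul_coeff_zero, Polynomial.mul_coeff_zero, Polynomial.coeff_X_zero,
      zero_mul, zero_mul]
    simp only [coeff_DP, Nat.zero_le, if_true, Nat.sub_zero]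
    norm_num [Del]
  | t+1 =>
    rw [Polynomial.coeff_X_mul, Polynomial.coeff_X_mul]
    simp only [coeff_DP]
    rcases Nat.lt_or_ge t (w+2) with ht | ht
    · obtain ⟨b, hb⟩ : ∃ b, w + 1 - t = b := ⟨_, rfl⟩
      rw [if_pos (by omega), if_pos (by omega), if_pos (by omega), if_pos (by omega)]
      rw [show w + 3 - (t+1) = b+1 from by omega, show w + 2 - t = b + 1 from by omega,
        show w + 2 - (t+1) = b from by omega, show w + 1 - t = b from by omega]
      rw [show Del (t+1) (b+1) = Del t (b+1) + Del (t+1) b + Del t b from by simp [Del]]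
      push_cast
      ring
    · rcases Nat.lt_or_ge t (w+3) with ht3 | ht3
      · have htt : t = w + 2 := by omega
        subst htt
        rw [if_pos (by omega), if_pos (by omega), if_neg (by omega), if_neg (by omega)]
        rw [show w + 3 - (w+2+1) = 0 from by omega, show w + 2 - (w+2) = 0 from by omega,
          Del_zero_right, Del_zero_right]
        ring
      · rw [if_neg (by omega), if_neg (by omega), if_neg (by omega), if_neg (by omega)]
        ring

lemma base1 : hNumPoly 1 = DP 1 := by
  rw [hNumPoly, DP]
  simp [Finset.sum_range_succ, nIndep_zero, n1_1, Del]
  ring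

lemma base2 : hNumPoly 2 = DP 2 := by
  rw [hNumPoly, DP]
  simp [Finset.sum_range_succ, nIndep_zero, n2_1, n2_2, Del]
  ring

lemma main_poly : ∀ m : ℕ, hNumPoly (m+1) = DP (m+1) := by
  intro m
  induction m using Nat.strong_induction_on with
  | _ m ih =>
    match m with
    | 0 => exact base1
    | 1 => exact base2
    | (w+2) =>
      have e1 : hNumPoly (w+3) = (Polynomial.X + 1) * hNumPoly (w+2)
          + Polynomial.X * hNumPoly (w+1) := h_rec w
      rw [show w+2+1 = w+3 from rfl, e1, ih (w+1) (by omega), ih w (by omega), DP_rec w]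
/-- For every `m ≥ 1` and `0 ≤ k ≤ m`, the `h`-vector entry `h_k(m)` of the independence
complex of `Gₘ` — the coefficient of `t^{m−k}` in `∑ f_{i−1}(m)(t−1)^{m−i}` — equals the
Delannoy number `d(m, k) = D(m−k, k)`. -/
theorem Gm_hVector_delannoy (m : ℕ) (hm : 1 ≤ m) (k : ℕ) (hk : k ≤ m) :
    (hNumPoly m).coeff (m - k) = (Del (m - k) k : ℤ) := by
  obtain ⟨w, rfl⟩ : ∃ w, m = w + 1 := ⟨m - 1, by omega⟩
  rw [main_poly w, coeff_DP, if_pos (by omega), show w + 1 - (w + 1 - k) = k from by omega]
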